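/- arXiv:1505.06929 — 2 statements merged into one kernel-verified Lean document; each statement's English description precedes it below -/
import Mathlib

section
/- Let V ⊆ Q≥0^r be a cone and {V_ε} the standard noise in the direction of V. The following are equivalent: (1) V_ε is closed under direct sums; (2) the compact part V_ε^c is closed under direct sums; (3) for any w_1, w_2 in V with ‖w_1‖ = ‖w_2‖ = ε, there exists w in V with ‖w‖ = ε, w_1 ≤ w and w_2 ≤ w. -/
open CategoryTheory CategoryTheory.Limits

set_option synthInstance.maxHeartbeats 1000000
set_option maxHeartbeats 1000000

attribute [local instance 2000] Preorder.smallCategory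
attribute [local instance] CategoryTheory.Abelian.hasFiniteBiproducts

/-- The poset of `r`-tuples of non-negative rational numbers, with the componentwise order. -/
abbrev Qr (r : ℕ) := Fin r → ℚ≥0

/-- The poset of `r`-tuples of natural numbers, with the componentwise order. -/
abbrev Nr (r : ℕ) := Fin r → ℕ

/-- `bfloor α v = join {w ∈ ℕ^r | α w ≤ v}`, computed componentwise as `⌊vᵢ/α⌋`. -/
def bfloor (α : ℚ≥0) {r : ℕ} (v : Qr r) : Nr r := fun i => Nat.floor ((v i : ℚ) / (α : ℚ))

/-- The embedding `α : ℕ^r → ℚ≥0^r`, `w ↦ α w`. -/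
def embQ (α : ℚ≥0) {r : ℕ} (w : Nr r) : Qr r := fun i => α * (w i : ℚ≥0)

theorem bfloor_mono (α : ℚ≥0) (r : ℕ) : Monotone (bfloor α (r := r)) := by
  intro v w h i
  exact Nat.floor_mono (by gcongr; exact_mod_cast h i)

theorem embQ_mono (α : ℚ≥0) (r : ℕ) : Monotone (embQ α (r := r)) := by
  intro v w h i
  dsimp [embQ]
  gcongr
  exact_mod_cast h i

/-- A functor `G : ℚ≥0^r ⥤ C` is `α`-tame if `G(α bα v ≤ v)` is an isomorphism for every `v`,
i.e. `G` is (isomorphic to) the left Kan extension along `α : ℕ^r → ℚ≥0^r` of its restriction;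
equivalently, `G` is constant on the fundamental domains of `α`. -/
def IsAlphaTame {C : Type*} [Category C] (α : ℚ≥0) {r : ℕ} (G : Qr r ⥤ C) : Prop :=
  ∀ (v : Qr r) (h : embQ α (bfloor α v) ≤ v), IsIso (G.map (homOfLE h))

/-- A functor is tame if it is `α`-tame for some positive rational `α`. -/
def IsTame {C : Type*} [Category C] {r : ℕ} (G : Qr r ⥤ C) : Prop :=
  ∃ α : ℚ≥0, 0 < α ∧ IsAlphaTame α G

/-- The cone generated by `g 0, …, g (n-1)`. -/
def coneOf {r n : ℕ} (g : Fin n → Qr r) : Set (Qr r) :=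
  {w | ∃ c : Fin n → ℚ≥0, w = ∑ i, c i • g i}

/-- `V ⊆ ℚ≥0^r` is a cone. -/
def IsCone {r : ℕ} (V : Set (Qr r)) : Prop :=
  ∃ (n : ℕ), 0 < n ∧ ∃ g : Fin n → Qr r, V = coneOf g

/-- The max-norm on `ℚ≥0^r`. -/
def normQ {r : ℕ} (w : Qr r) : ℚ≥0 := Finset.univ.sup w

/-- The `ε`-component of the standard noise in the direction of `V`. -/
def Veps (K : Type) [Field K] {r : ℕ} (V : Set (Qr r)) (ε : ℚ≥0) :
    Set (Qr r ⥤ ModuleCat K) :=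
  {F | IsTame F ∧ ∀ (u : Qr r) (x : F.obj u), ∃ w ∈ V, normQ w = ε ∧
    F.map (homOfLE (show u ≤ u + w from fun _ => le_self_add)) x = 0}

/-- A subfunctor of `F : I ⥤ Vect_K`. -/
structure Subfunctor (K : Type) [Field K] {I : Type} [Category I] (F : I ⥤ ModuleCat K) where
  toFun : ∀ i, Submodule K (F.obj i)
  map_le : ∀ {i j : I} (h : i ⟶ j), Submodule.map (F.map h).hom (toFun i) ≤ toFun j

/-- `F` is compact. -/
def IsCompactFunctor (K : Type) [Field K] {I : Type} [Category I] (F : I ⥤ ModuleCat K) :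
    Prop :=
  ∀ S : ℕ → Subfunctor K F, (∀ n i, (S n).toFun i ≤ (S (n + 1)).toFun i) →
    (∀ i, ⨆ n, (S n).toFun i = ⊤) → ∃ k, ∀ i, (S k).toFun i = ⊤

/-! Condition (3) says that the `ε`-sphere `{w ∈ V | ‖w‖ = ε}` is directed. If it is, an
element `(x, y)` of `F ⊞ G` is killed by any common upper bound of vectors killing `x` and `y`;
tameness passes to `F ⊞ G` because two tameness steps `α`, `β` have a common submultiple.
Conversely, for `w ∈ V` let `I_w` be `K` on the down-set `{u | ¬ w ≤ u}` and `0` elsewhere: it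
lies in `V_ε^c`, and for nonzero `w₁`, `w₂` a vector `w` killing `(1, 1) ∈ (I_{w₁} ⊞ I_{w₂})(0)`
must satisfy `w₁ ≤ w` and `w₂ ≤ w`. -/

universe v

section Biprod

variable {R : Type*} [Ring R] {C : Type*} [Category C]

noncomputable def biprodComponents (F G : C ⥤ ModuleCat.{v} R) [HasBinaryBiproduct F G] (u : C)
    (x : (F ⊞ G).obj u) : F.obj u × G.obj u :=
  ((biprod.fst : F ⊞ G ⟶ F).app u x, (biprod.snd : F ⊞ G ⟶ G).app u x)

variable {F G : C ⥤ ModuleCat.{v} R} [HasBinaryBiproduct F G]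

theorem biprodComponents_bijective (u : C) : Function.Bijective (biprodComponents F G u) := by
  have total := congr_app (biprod.total (X := F) (Y := G)) u
  have inl_fst := congr_app (biprod.inl_fst (X := F) (Y := G)) u
  have inl_snd := congr_app (biprod.inl_snd (X := F) (Y := G)) u
  have inr_fst := congr_app (biprod.inr_fst (X := F) (Y := G)) u
  have inr_snd := congr_app (biprod.inr_snd (X := F) (Y := G)) u
  simp only [NatTrans.app_add, NatTrans.comp_app, NatTrans.id_app, NatTrans.app_zero]
    at total inl_fst inl_snd inr_fst inr_snd
  refine ⟨fun x y hxy => ?_, fun ⟨a, b⟩ =>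
    ⟨(biprod.inl : F ⟶ F ⊞ G).app u a + (biprod.inr : G ⟶ F ⊞ G).app u b, ?_⟩⟩
  · simp only [biprodComponents, Prod.ext_iff] at hxy
    rw [← ConcreteCategory.id_apply x, ← ConcreteCategory.id_apply y, ← total]
    simp [hxy]
  · simp only [biprodComponents, map_add, ← ConcreteCategory.comp_apply, inl_fst, inl_snd,
      inr_fst, inr_snd]
    simp

theorem biprodComponents_map {u v : C} (f : u ⟶ v) (x : (F ⊞ G).obj u) :
    biprodComponents F G v ((F ⊞ G).map f x) =
      Prod.map (F.map f) (G.map f) (biprodComponents F G u x) := by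
  simp [biprodComponents, NatTrans.naturality_apply]

theorem biprod_map_apply_eq_zero_iff {u v : C} (f : u ⟶ v) (x : (F ⊞ G).obj u) :
    (F ⊞ G).map f x = 0 ↔
      F.map f ((biprod.fst : F ⊞ G ⟶ F).app u x) = 0 ∧
        G.map f ((biprod.snd : F ⊞ G ⟶ G).app u x) = 0 := by
  rw [← (biprodComponents_bijective v).injective.eq_iff, biprodComponents_map]
  simp [biprodComponents]

theorem isIso_biprod_map {u v : C} (f : u ⟶ v) [IsIso (F.map f)] [IsIso (G.map f)] :
    IsIso ((F ⊞ G).map f) := by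
  rw [ConcreteCategory.isIso_iff_bijective, ← (biprodComponents_bijective v).of_comp_iff']
  have hcomm : biprodComponents F G v ∘ (F ⊞ G).map f =
      Prod.map (F.map f) (G.map f) ∘ biprodComponents F G u :=
    funext (biprodComponents_map f)
  rw [hcomm]
  have hF := (ConcreteCategory.isIso_iff_bijective (F.map f)).mp ‹_›
  have hG := (ConcreteCategory.isIso_iff_bijective (G.map f)).mp ‹_›
  exact (hF.prodMap hG).comp (biprodComponents_bijective u)

end Biprod

theorem map_apply_eq_zero_of_le {R : Type*} [Ring R] {P : Type*} [Preorder P]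
    {F : P ⥤ ModuleCat.{v} R} {a b c : P} (hab : a ≤ b) (hbc : b ≤ c) {x : F.obj a}
    (hx : F.map (homOfLE hab) x = 0) : F.map (homOfLE (hab.trans hbc)) x = 0 := by
  rw [← homOfLE_comp hab hbc, F.map_comp, ConcreteCategory.comp_apply, hx, map_zero]

section Tame

variable {r : ℕ}

theorem gc_embQ_bfloor {α : ℚ≥0} (hα : 0 < α) :
    GaloisConnection (embQ α (r := r)) (bfloor α) := by
  intro w v
  refine forall_congr' fun i => ?_
  rw [bfloor, Nat.le_floor_iff (by positivity), le_div_iff₀ (by exact_mod_cast hα), mul_comm]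
  simp only [embQ]
  norm_cast

theorem embQ_mul_natCast (γ : ℚ≥0) (n : ℕ) (w : Nr r) : embQ (γ * n) w = embQ γ (n • w) := by
  funext i
  simp only [embQ, Pi.smul_apply, smul_eq_mul, Nat.cast_mul]
  ring

theorem IsAlphaTame.isIso_map_of_le {C : Type*} [Category C] {G : Qr r ⥤ C} {α : ℚ≥0}
    (hα : 0 < α) (hG : IsAlphaTame α G) {b v : Qr r} (hb : embQ α (bfloor α v) ≤ b)
    (hbv : b ≤ v) : IsIso (G.map (homOfLE hbv)) := by
  have hfloor : embQ α (bfloor α b) = embQ α (bfloor α v) :=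
    congrArg _ (le_antisymm (bfloor_mono α r hbv) ((gc_embQ_bfloor hα).le_iff_le.mp hb))
  have hstart : ∀ (a : Qr r) (h : a ≤ b), a = embQ α (bfloor α b) →
      IsIso (G.map (homOfLE h)) := by
    rintro a h rfl
    exact hG b h
  have : IsIso (G.map (homOfLE hb)) := hstart _ hb hfloor.symm
  have : IsIso (G.map (homOfLE hb) ≫ G.map (homOfLE hbv)) := by
    rw [← G.map_comp, homOfLE_comp]
    exact hG v _
  exact IsIso.of_isIso_comp_left (G.map (homOfLE hb)) _

theorem IsAlphaTame.of_mul_natCast {C : Type*} [Category C] {G : Qr r ⥤ C} {γ : ℚ≥0} {n : ℕ}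
    (hγ : 0 < γ) (hn : 0 < γ * n) (hG : IsAlphaTame (γ * n) G) : IsAlphaTame γ G := by
  refine fun v h => hG.isIso_map_of_le hn ?_ h
  rw [embQ_mul_natCast]
  apply embQ_mono
  rw [← (gc_embQ_bfloor hγ).le_iff_le, ← embQ_mul_natCast]
  exact (gc_embQ_bfloor hn).l_u_le v

theorem exists_pos_eq_mul_natCast {ι : Type*} [Fintype ι] (q : ι → ℚ≥0) :
    ∃ γ : ℚ≥0, 0 < γ ∧ ∀ i, ∃ k : ℕ, q i = γ * k := by
  classical
  refine ⟨(∏ j, ((q j).den : ℚ≥0))⁻¹, by positivity,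
    fun i => ⟨(q i).num * ∏ j ∈ Finset.univ.erase i, (q j).den, ?_⟩⟩
  rw [← Finset.mul_prod_erase Finset.univ _ (Finset.mem_univ i)]
  push_cast
  conv_lhs => rw [← NNRat.num_div_den (q i)]
  field_simp

theorem IsTame.biprod {R : Type*} [Ring R] {F G : Qr r ⥤ ModuleCat.{v} R}
    [HasBinaryBiproduct F G] (hF : IsTame F) (hG : IsTame G) : IsTame (F ⊞ G) := by
  obtain ⟨α, hα, hFα⟩ := hF
  obtain ⟨β, hβ, hGβ⟩ := hG
  obtain ⟨γ, hγ, hmul⟩ := exists_pos_eq_mul_natCast ![α, β]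
  obtain ⟨n, rfl : α = γ * n⟩ := hmul 0
  obtain ⟨m, rfl : β = γ * m⟩ := hmul 1
  have hFγ := hFα.of_mul_natCast hγ hα
  have hGγ := hGβ.of_mul_natCast hγ hβ
  exact ⟨γ, hγ, fun v h => have := hFγ v h; have := hGγ v h; isIso_biprod_map _⟩

end Tame

section Interval

variable (K : Type) [Field K] {P : Type} [Preorder P]

def intervalSubmodule (w u : P) : Submodule K (ULift.{v} K) where
  carrier := {x | w ≤ u → x = 0}
  add_mem' hx hy h := by rw [hx h, hy h, add_zero]
  zero_mem' _ := rfl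
  smul_mem' c _ hx h := by rw [hx h, smul_zero]

open Classical in
/-- `K` on the down-set `{u | ¬ w ≤ u}` with identity structure maps, `0` on the up-set of `w`;
the objects are submodules of `ULift K` so that the functor lands in every universe. -/
noncomputable def intervalFunctor (w : P) : P ⥤ ModuleCat.{v} K where
  obj u := ModuleCat.of K (intervalSubmodule.{v} K w u)
  map {_ v} _ := ModuleCat.ofHom
    { toFun x := ⟨if w ≤ v then 0 else x.1, fun h => if_pos h⟩
      map_add' x y := by ext1; split_ifs <;> simp
      map_smul' c x := by ext1; split_ifs <;> simp }
  map_id u := by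
    ext x
    by_cases h : w ≤ u
    · simp [h, x.2 h]
    · simp [h]
  map_comp {_ v t} f g := by
    ext x
    by_cases ht : w ≤ t
    · simp [ht]
    · have hv : ¬ w ≤ v := fun hv => ht (hv.trans (leOfHom g))
      simp [ht, hv]

variable {K} in
theorem intervalFunctor.eq_zero {w u : P} (hu : w ≤ u) (x : (intervalFunctor.{v} K w).obj u) :
    x = 0 :=
  Subtype.ext (x.2 hu)

variable {K} in
theorem intervalFunctor.map_apply_of_not_le {w u v : P} (f : u ⟶ v) (hv : ¬ w ≤ v)
    (x : (intervalFunctor.{v} K w).obj u) : ((intervalFunctor.{v} K w).map f x).1 = x.1 :=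
  if_neg hv

theorem isIso_intervalFunctor_map (w : P) {a b : P} (hab : a ≤ b) (hw : w ≤ b → w ≤ a) :
    IsIso ((intervalFunctor.{v} K w).map (homOfLE hab)) := by
  rw [ConcreteCategory.isIso_iff_bijective]
  by_cases hb : w ≤ b
  · open intervalFunctor in
    exact ⟨fun x y _ => (eq_zero (hw hb) x).trans (eq_zero (hw hb) y).symm,
      fun y => ⟨0, (eq_zero hb _).trans (eq_zero hb y).symm⟩⟩
  · refine ⟨fun x y hxy => Subtype.ext ?_, fun y => ⟨⟨y.1, fun ha => y.2 (ha.trans hab)⟩, ?_⟩⟩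
    · rw [← intervalFunctor.map_apply_of_not_le _ hb x, hxy,
        intervalFunctor.map_apply_of_not_le _ hb]
    · exact Subtype.ext (intervalFunctor.map_apply_of_not_le _ hb _)

section Generator

variable [OrderBot P] {w : P} (hw : ¬ w ≤ ⊥)

def intervalFunctor.gen : (intervalFunctor.{v} K w).obj ⊥ := ⟨ULift.up 1, fun h => absurd h hw⟩

theorem intervalFunctor.le_of_map_gen_eq_zero {v : P} (h : ⊥ ≤ v)
    (h0 : (intervalFunctor.{v} K w).map (homOfLE h) (gen K hw) = 0) : w ≤ v := by
  by_contra hv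
  have h1 := congrArg Subtype.val h0
  rw [map_apply_of_not_le _ hv] at h1
  exact one_ne_zero (congrArg ULift.down h1)

theorem intervalFunctor.eq_top_of_gen_mem (S : Subfunctor K (intervalFunctor.{v} K w))
    (hS : gen K hw ∈ S.toFun ⊥) (u : P) : S.toFun u = ⊤ := by
  refine eq_top_iff.mpr fun x _ => ?_
  by_cases hu : w ≤ u
  · rw [eq_zero hu x]
    exact zero_mem _
  · have hx : x = x.1.down • (intervalFunctor.{v} K w).map (homOfLE bot_le) (gen K hw) :=
      Subtype.ext <| ULift.ext _ _ <| by
        change x.1.down = x.1.down * ((intervalFunctor.{v} K w).map _ (gen K hw)).1.down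
        rw [map_apply_of_not_le _ hu]
        exact (mul_one _).symm
    rw [hx]
    exact (S.toFun u).smul_mem _ (S.map_le _ ⟨_, hS, rfl⟩)

end Generator

theorem isCompactFunctor_intervalFunctor [OrderBot P] (w : P) :
    IsCompactFunctor K (intervalFunctor.{v} K w) := by
  intro S hmono hsup
  by_cases hw : w ≤ ⊥
  · refine ⟨0, fun u => eq_top_iff.mpr fun x _ => ?_⟩
    rw [intervalFunctor.eq_zero (hw.trans bot_le) x]
    exact zero_mem _
  · have hdir : Directed (· ≤ ·) fun n => (S n).toFun ⊥ :=
      (monotone_nat_of_le_succ fun n => hmono n ⊥).directed_le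
    obtain ⟨k, hk⟩ := (Submodule.mem_iSup_of_directed _ hdir).mp
      (hsup ⊥ ▸ Submodule.mem_top : intervalFunctor.gen K hw ∈ ⨆ n, (S n).toFun ⊥)
    exact ⟨k, intervalFunctor.eq_top_of_gen_mem K hw (S k) hk⟩

end Interval

section Noise

variable (K : Type) [Field K] {r : ℕ}

theorem isTame_intervalFunctor (w : Qr r) : IsTame (intervalFunctor.{v} K w) := by
  obtain ⟨γ, hγ, hw⟩ := exists_pos_eq_mul_natCast w
  choose k hk using hw
  obtain rfl : w = embQ γ k := funext hk
  exact ⟨γ, hγ, fun v h => isIso_intervalFunctor_map K _ h fun hwv =>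
    embQ_mono γ r ((gc_embQ_bfloor hγ).le_iff_le.mp hwv)⟩

variable {K} {V : Set (Qr r)} {ε : ℚ≥0}

theorem intervalFunctor_mem_Veps {w : Qr r} (hw : w ∈ V) (hwε : normQ w = ε) :
    intervalFunctor.{v} K w ∈ Veps K V ε :=
  ⟨isTame_intervalFunctor K w, fun _ _ => ⟨w, hw, hwε, intervalFunctor.eq_zero le_add_self _⟩⟩

theorem biprod_mem_Veps (hV : DirectedOn (· ≤ ·) {w | w ∈ V ∧ normQ w = ε})
    {F G : Qr r ⥤ ModuleCat.{v} K} (hF : F ∈ Veps K V ε) (hG : G ∈ Veps K V ε) :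
    (F ⊞ G) ∈ Veps K V ε := by
  refine ⟨hF.1.biprod hG.1, fun u x => ?_⟩
  obtain ⟨w₁, hw₁, hw₁ε, hx₁⟩ := hF.2 u ((biprod.fst : F ⊞ G ⟶ F).app u x)
  obtain ⟨w₂, hw₂, hw₂ε, hx₂⟩ := hG.2 u ((biprod.snd : F ⊞ G ⟶ G).app u x)
  obtain ⟨w, ⟨hw, hwε⟩, h₁, h₂⟩ := hV w₁ ⟨hw₁, hw₁ε⟩ w₂ ⟨hw₂, hw₂ε⟩
  exact ⟨w, hw, hwε, (biprod_map_apply_eq_zero_iff _ x).mpr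
    ⟨map_apply_eq_zero_of_le le_self_add (add_le_add le_rfl h₁) hx₁,
      map_apply_eq_zero_of_le le_self_add (add_le_add le_rfl h₂) hx₂⟩⟩

theorem directedOn_of_forall_biprod_mem
    (hclosed : ∀ F G : Qr r ⥤ ModuleCat.{v} K, F ∈ Veps K V ε → IsCompactFunctor K F →
      G ∈ Veps K V ε → IsCompactFunctor K G → (F ⊞ G) ∈ Veps K V ε) :
    DirectedOn (· ≤ ·) {w | w ∈ V ∧ normQ w = ε} := by
  rintro w₁ ⟨hw₁, hw₁ε⟩ w₂ ⟨hw₂, hw₂ε⟩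
  by_cases hw₁0 : w₁ ≤ ⊥
  · exact ⟨w₂, ⟨hw₂, hw₂ε⟩, hw₁0.trans bot_le, le_rfl⟩
  by_cases hw₂0 : w₂ ≤ ⊥
  · exact ⟨w₁, ⟨hw₁, hw₁ε⟩, le_rfl, hw₂0.trans bot_le⟩
  obtain ⟨-, hkill⟩ := hclosed _ _
    (intervalFunctor_mem_Veps hw₁ hw₁ε) (isCompactFunctor_intervalFunctor K w₁)
    (intervalFunctor_mem_Veps hw₂ hw₂ε) (isCompactFunctor_intervalFunctor K w₂)
  obtain ⟨x, hx⟩ := (biprodComponents_bijective ⊥).surjective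
    (intervalFunctor.gen K hw₁0, intervalFunctor.gen K hw₂0)
  obtain ⟨w, hw, hwε, hxw⟩ := hkill ⊥ x
  simp only [biprodComponents, Prod.ext_iff] at hx
  rw [biprod_map_apply_eq_zero_iff, hx.1, hx.2] at hxw
  have h₁ := intervalFunctor.le_of_map_gen_eq_zero K hw₁0 _ hxw.1
  have h₂ := intervalFunctor.le_of_map_gen_eq_zero K hw₂0 _ hxw.2
  rw [bot_eq_zero, zero_add] at h₁ h₂
  exact ⟨w, ⟨hw, hwε⟩, h₁, h₂⟩

end Noise

theorem standardNoise_closed_directSums_iff_general (K : Type) [Field K] (r : ℕ)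
    (V : Set (Qr r)) (ε : ℚ≥0) :
    ((∀ F G : Qr r ⥤ ModuleCat K, F ∈ Veps K V ε → G ∈ Veps K V ε →
        (F ⊞ G) ∈ Veps K V ε) ↔
      (∀ w₁ w₂, w₁ ∈ V → w₂ ∈ V → normQ w₁ = ε → normQ w₂ = ε →
        ∃ w ∈ V, normQ w = ε ∧ w₁ ≤ w ∧ w₂ ≤ w)) ∧
    ((∀ F G : Qr r ⥤ ModuleCat K,
        F ∈ Veps K V ε → IsCompactFunctor K F → G ∈ Veps K V ε → IsCompactFunctor K G →
          (F ⊞ G) ∈ Veps K V ε) ↔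
      (∀ w₁ w₂, w₁ ∈ V → w₂ ∈ V → normQ w₁ = ε → normQ w₂ = ε →
        ∃ w ∈ V, normQ w = ε ∧ w₁ ≤ w ∧ w₂ ≤ w)) := by
  have directed_iff : (∀ w₁ w₂, w₁ ∈ V → w₂ ∈ V → normQ w₁ = ε → normQ w₂ = ε →
      ∃ w ∈ V, normQ w = ε ∧ w₁ ≤ w ∧ w₂ ≤ w) ↔
        DirectedOn (· ≤ ·) {w | w ∈ V ∧ normQ w = ε} := by
    simp only [DirectedOn, Set.mem_ofPred_eq, and_imp, and_assoc]
    grind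
  rw [directed_iff]
  exact ⟨⟨fun h => directedOn_of_forall_biprod_mem fun F G hF _ hG _ => h F G hF hG,
      fun h _ _ => biprod_mem_Veps h⟩,
    ⟨directedOn_of_forall_biprod_mem, fun h _ _ hF _ hG _ => biprod_mem_Veps h hF hG⟩⟩

/-- For the standard noise in the direction of a cone `V`, the following are equivalent:
(1) `V_ε` is closed under direct sums; (2) its compact part `V_ε^c` is closed under direct
sums; (3) any two vectors of `V` of norm `ε` admit a common upper bound in `V` of norm `ε`. -/
theorem standardNoise_closed_directSums_iff (K : Type) [Field K] (r : ℕ)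
    (V : Set (Qr r)) (hV : IsCone V) (ε : ℚ≥0) :
    ((∀ F G : Qr r ⥤ ModuleCat K, F ∈ Veps K V ε → G ∈ Veps K V ε →
        (F ⊞ G) ∈ Veps K V ε) ↔
      (∀ w₁ w₂, w₁ ∈ V → w₂ ∈ V → normQ w₁ = ε → normQ w₂ = ε →
        ∃ w ∈ V, normQ w = ε ∧ w₁ ≤ w ∧ w₂ ≤ w)) ∧
    ((∀ F G : Qr r ⥤ ModuleCat K,
        F ∈ Veps K V ε → IsCompactFunctor K F → G ∈ Veps K V ε → IsCompactFunctor K G →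
          (F ⊞ G) ∈ Veps K V ε) ↔
      (∀ w₁ w₂, w₁ ∈ V → w₂ ∈ V → normQ w₁ = ε → normQ w₂ = ε →
        ∃ w ∈ V, normQ w = ε ∧ w₁ ≤ w ∧ w₂ ≤ w)) :=
  standardNoise_closed_directSums_iff_general K r V ε
end

section
/- Fix a noise system on Tame(Q≥0^r, Vect_K). If φ: F → G is an ε₁-equivalence and ψ: G → H is an ε₂-equivalence, then ψ∘φ is an (ε₁+ε₂)-equivalence. Moreover, ε-equivalences are preserved by pushouts and pullbacks: in a pushout square with parallel arrows φ: H → F, φ': G → P, if φ is an ε-equivalence so is φ'; dually for pullbacks. -/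
open CategoryTheory CategoryTheory.Limits

set_option synthInstance.maxHeartbeats 1000000
set_option maxHeartbeats 1000000

attribute [local instance 2000] Preorder.smallCategory
attribute [local instance] CategoryTheory.Abelian.hasFiniteBiproducts

/-- A noise system in `Tame(ℚ≥0^r, Vect_K)`. -/
structure NoiseSystem (K : Type) [Field K] (r : ℕ) where
  S : ℚ≥0 → Set (Qr r ⥤ ModuleCat K)
  tame_mem : ∀ (ε : ℚ≥0) (F : Qr r ⥤ ModuleCat K), F ∈ S ε → IsTame F
  zero_mem : ∀ (ε : ℚ≥0) (F : Qr r ⥤ ModuleCat K), IsZero F → F ∈ S ε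
  mono : ∀ τ ε : ℚ≥0, τ < ε → S τ ⊆ S ε
  ses_small : ∀ (F G H : Qr r ⥤ ModuleCat K) (f : F ⟶ G) (g : G ⟶ H) (w : f ≫ g = 0),
    (ShortComplex.mk f g w).ShortExact → IsTame F → IsTame H →
      ∀ ε : ℚ≥0, G ∈ S ε → F ∈ S ε ∧ H ∈ S ε
  ses_add : ∀ (F G H : Qr r ⥤ ModuleCat K) (f : F ⟶ G) (g : G ⟶ H) (w : f ≫ g = 0),
    (ShortComplex.mk f g w).ShortExact → IsTame G →
      ∀ ε τ : ℚ≥0, F ∈ S ε → H ∈ S τ → G ∈ S (ε + τ)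

/-- `φ` is an `ε`-equivalence: its kernel is `τ`-small and its cokernel is `μ`-small with
`τ + μ ≤ ε`. -/
noncomputable def IsEpsEquiv {K : Type} [Field K] {r : ℕ} (N : NoiseSystem K r) (ε : ℚ≥0)
    {F G : Qr r ⥤ ModuleCat K} (φ : F ⟶ G) : Prop :=
  ∃ τ μ : ℚ≥0, τ + μ ≤ ε ∧ kernel φ ∈ N.S τ ∧ cokernel φ ∈ N.S μ

/-!
A functor that is `α`-tame is also `α / n`-tame, so any two tame functors are tame for a common
step `β`; as kernels and cokernels in a functor category are computed pointwise, kernels and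
cokernels of maps between tame functors are then tame. With this, the axioms of a noise system
make each `S ε` behave like a Serre class whose index adds up along extensions, and the three
claims follow as for Serre classes: composition from the exact sequence
`0 ⟶ ker φ ⟶ ker (φ ≫ ψ) ⟶ ker ψ ⟶ coker φ ⟶ coker (φ ≫ ψ) ⟶ coker ψ ⟶ 0`, pushouts from
`ker φ ↠ ker φ'` and `coker φ ≅ coker φ'`, pullbacks from `ker φ ≅ ker φ'` and
`coker φ ↪ coker φ'`.
-/

theorem embQ_bfloor_le (α : ℚ≥0) {r : ℕ} (v : Qr r) : embQ α (bfloor α v) ≤ v := by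
  intro i
  rcases eq_or_ne α 0 with rfl | hα
  · simp [embQ]
  · rw [embQ, ← NNRat.coe_le_coe, NNRat.coe_mul, NNRat.coe_natCast, ← le_div_iff₀' (by positivity)]
    exact Nat.floor_le (by positivity)

theorem bfloor_embQ {α : ℚ≥0} (hα : 0 < α) {r : ℕ} (w : Nr r) : bfloor α (embQ α w) = w := by
  funext i
  simp [bfloor, embQ, hα.ne']

theorem bfloor_natCast_mul (n : ℕ) (β : ℚ≥0) {r : ℕ} (v : Qr r) :
    bfloor (n * β) v = fun i => bfloor β v i / n := by
  funext i
  simp only [bfloor, NNRat.coe_mul, NNRat.coe_natCast, div_mul_eq_div_div_swap,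
    Nat.floor_div_natCast]

theorem IsAlphaTame.isIso_map {C : Type*} [Category C] {α : ℚ≥0} {r : ℕ} {G : Qr r ⥤ C}
    (hG : IsAlphaTame α G) {u v : Qr r} (huv : u ≤ v) (hfl : bfloor α u = bfloor α v) :
    IsIso (G.map (homOfLE huv)) := by
  have := hG u (embQ_bfloor_le α u)
  have := hG v (embQ_bfloor_le α v)
  have fac : G.map (homOfLE (embQ_bfloor_le α u)) ≫ G.map (homOfLE huv) =
      G.map (eqToHom (by rw [hfl])) ≫ G.map (homOfLE (embQ_bfloor_le α v)) := by
    simp only [← G.map_comp]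
    rfl
  exact IsIso.of_isIso_fac_left fac

theorem IsAlphaTame.of_natCast_mul {C : Type*} [Category C] {n : ℕ} {β : ℚ≥0} (hβ : 0 < β)
    {r : ℕ} {G : Qr r ⥤ C} (hG : IsAlphaTame (n * β) G) : IsAlphaTame β G := fun v h =>
  hG.isIso_map h (by rw [bfloor_natCast_mul, bfloor_natCast_mul, bfloor_embQ hβ])

theorem NNRat.eq_natCast_mul_inv (q : ℚ≥0) {d : ℕ} (hd : d ≠ 0) :
    q = ((q.num * d : ℕ) : ℚ≥0) * ((q.den * d : ℕ) : ℚ≥0)⁻¹ := by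
  conv_lhs => rw [← NNRat.num_div_den q]
  push_cast
  field_simp

theorem IsTame.exists_isAlphaTame_both {C : Type*} [Category C] {r : ℕ} {A B : Qr r ⥤ C}
    (hA : IsTame A) (hB : IsTame B) : ∃ β : ℚ≥0, 0 < β ∧ IsAlphaTame β A ∧ IsAlphaTame β B := by
  obtain ⟨α, -, hAα⟩ := hA
  obtain ⟨γ, -, hBγ⟩ := hB
  have hβ : 0 < ((α.den * γ.den : ℕ) : ℚ≥0)⁻¹ := by positivity
  refine ⟨_, hβ, ?_, ?_⟩
  · rw [α.eq_natCast_mul_inv γ.den_ne_zero] at hAα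
    exact hAα.of_natCast_mul hβ
  · rw [γ.eq_natCast_mul_inv α.den_ne_zero, mul_comm γ.den] at hBγ
    exact hBγ.of_natCast_mul hβ

section Functorial

variable {J C : Type*} [Category J] [Category C] [Abelian C]

theorem isIso_map_kernel {A B : J ⥤ C} (χ : A ⟶ B) {u v : J} (f : u ⟶ v)
    [IsIso (A.map f)] [Mono (B.map f)] : IsIso ((kernel χ).map f) := by
  have fac : (kernel χ).map f ≫ kernelComparison χ ((evaluation J C).obj v) =
      kernelComparison χ ((evaluation J C).obj u) ≫
        kernel.map (χ.app u) (χ.app v) (A.map f) (B.map f) (χ.naturality f).symm := by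
    ext
    simp [kernelComparison]
  exact IsIso.of_isIso_fac_right fac

theorem isIso_map_cokernel {A B : J ⥤ C} (χ : A ⟶ B) {u v : J} (f : u ⟶ v)
    [Epi (A.map f)] [IsIso (B.map f)] : IsIso ((cokernel χ).map f) := by
  have fac : cokernelComparison χ ((evaluation J C).obj u) ≫ (cokernel χ).map f =
      cokernel.map (χ.app u) (χ.app v) (A.map f) (B.map f) (χ.naturality f).symm ≫
        cokernelComparison χ ((evaluation J C).obj v) := by
    ext
    simp [cokernelComparison]
  exact IsIso.of_isIso_fac_left fac

end Functorial

section Tame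

variable {C : Type*} [Category C] [Abelian C] {r : ℕ} {A B : Qr r ⥤ C}

theorem IsTame.kernel (χ : A ⟶ B) (hA : IsTame A) (hB : IsTame B) : IsTame (kernel χ) := by
  obtain ⟨β, hβ, hAβ, hBβ⟩ := hA.exists_isAlphaTame_both hB
  refine ⟨β, hβ, fun v hv => ?_⟩
  have := hAβ v hv
  have := hBβ v hv
  exact isIso_map_kernel χ _

theorem IsTame.cokernel (χ : A ⟶ B) (hA : IsTame A) (hB : IsTame B) : IsTame (cokernel χ) := by
  obtain ⟨β, hβ, hAβ, hBβ⟩ := hA.exists_isAlphaTame_both hB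
  refine ⟨β, hβ, fun v hv => ?_⟩
  have := hAβ v hv
  have := hBβ v hv
  exact isIso_map_cokernel χ _

end Tame

namespace NoiseSystem

variable {K : Type} [Field K] {r : ℕ} (N : NoiseSystem K r) {A B : Qr r ⥤ ModuleCat K}
  {ε τ μ : ℚ≥0}

theorem mem_of_epi (g : B ⟶ A) [Epi g] (hB : B ∈ N.S ε) (hA : IsTame A) : A ∈ N.S ε :=
  (N.ses_small _ _ _ _ _ _
    (.mk' ((ShortComplex.mk _ _ (kernel.condition g)).exact_of_f_is_kernel (kernelIsKernel g))
      inferInstance inferInstance)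
    ((N.tame_mem _ _ hB).kernel g hA) hA ε hB).2

theorem mem_of_mono (f : A ⟶ B) [Mono f] (hB : B ∈ N.S ε) (hA : IsTame A) : A ∈ N.S ε :=
  (N.ses_small _ _ _ _ _ _
    (.mk' ((ShortComplex.mk _ _ (cokernel.condition f)).exact_of_g_is_cokernel
      (cokernelIsCokernel f)) inferInstance inferInstance)
    hA (hA.cokernel f (N.tame_mem _ _ hB)) ε hB).1

/-- The middle term of an exact sequence `X₁ ⟶ X₂ ⟶ X₃` is an extension of the cokernel of
`X₁ ⟶ X₂`, a subobject of `X₃`, by the kernel of `X₂ ⟶ X₃`, a quotient of `X₁`. -/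
theorem mem_add_of_exact {S : ShortComplex (Qr r ⥤ ModuleCat K)} (hS : S.Exact)
    (h₁ : S.X₁ ∈ N.S τ) (h₃ : S.X₃ ∈ N.S μ) (h₂ : IsTame S.X₂) : S.X₂ ∈ N.S (τ + μ) := by
  have hker : IsTame (kernel S.g) := h₂.kernel S.g (N.tame_mem _ _ h₃)
  have hS' := (ShortComplex.mk _ _ (kernel.condition S.g)).exact_of_f_is_kernel
    (kernelIsKernel S.g)
  have := hS.epi_kernelLift
  have := hS'.mono_cokernelDesc
  exact N.ses_add _ _ _ _ _ _
    (.mk' ((ShortComplex.mk _ _ (cokernel.condition (kernel.ι S.g))).exact_of_g_is_cokernel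
      (cokernelIsCokernel _)) inferInstance inferInstance) h₂ τ μ
    (N.mem_of_epi (kernel.lift S.g S.f S.zero) h₁ hker)
    (N.mem_of_mono (cokernel.desc _ S.g (kernel.condition S.g)) h₃ (hker.cokernel _ h₂))

end NoiseSystem

namespace IsEpsEquiv

variable {K : Type} [Field K] {r : ℕ} {N : NoiseSystem K r}

theorem comp {F G H : Qr r ⥤ ModuleCat K} (hF : IsTame F) (hH : IsTame H)
    {φ : F ⟶ G} {ψ : G ⟶ H} {ε₁ ε₂ : ℚ≥0} (hφ : IsEpsEquiv N ε₁ φ) (hψ : IsEpsEquiv N ε₂ ψ) :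
    IsEpsEquiv N (ε₁ + ε₂) (φ ≫ ψ) := by
  obtain ⟨τ₁, μ₁, h₁, hk₁, hc₁⟩ := hφ
  obtain ⟨τ₂, μ₂, h₂, hk₂, hc₂⟩ := hψ
  have hseq := kernelCokernelCompSequence_exact φ ψ
  refine ⟨τ₁ + τ₂, μ₁ + μ₂, ?_, ?_, ?_⟩
  · calc τ₁ + τ₂ + (μ₁ + μ₂) = (τ₁ + μ₁) + (τ₂ + μ₂) := add_add_add_comm _ _ _ _
      _ ≤ ε₁ + ε₂ := add_le_add h₁ h₂
  · exact N.mem_add_of_exact (hseq.exact 0) hk₁ hk₂ (hF.kernel _ hH)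
  · exact N.mem_add_of_exact (hseq.exact 3) hc₁ hc₂ (hF.cokernel _ hH)

variable {H F G P : Qr r ⥤ ModuleCat K} {φ : H ⟶ F} {t : H ⟶ G} {s : F ⟶ P} {φ' : G ⟶ P}
  {ε : ℚ≥0}

theorem of_isPushout (hG : IsTame G) (hP : IsTame P) (hpo : IsPushout φ t s φ')
    (hφ : IsEpsEquiv N ε φ) : IsEpsEquiv N ε φ' := by
  obtain ⟨τ, μ, hε, hk, hc⟩ := hφ
  have := Abelian.epi_kernel_map_of_isPushout hpo
  have := isIso_cokernel_map_of_isPushout hpo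
  exact ⟨τ, μ, hε, N.mem_of_epi (kernel.map φ φ' t s hpo.w) hk (hG.kernel φ' hP),
    N.mem_of_epi (cokernel.map φ φ' t s hpo.w) hc (hG.cokernel φ' hP)⟩

theorem of_isPullback (hH : IsTame H) (hF : IsTame F) (hpb : IsPullback φ t s φ')
    (hφ' : IsEpsEquiv N ε φ') : IsEpsEquiv N ε φ := by
  obtain ⟨τ, μ, hε, hk, hc⟩ := hφ'
  have := isIso_kernel_map_of_isPullback hpb
  have := Abelian.mono_cokernel_map_of_isPullback hpb
  exact ⟨τ, μ, hε, N.mem_of_mono (kernel.map φ φ' t s hpb.w) hk (hH.kernel φ hF),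
    N.mem_of_mono (cokernel.map φ φ' t s hpb.w) hc (hH.cokernel φ hF)⟩

end IsEpsEquiv

/-- `ε`-equivalences compose additively in `ε`, and are preserved by pushouts and
pullbacks. -/
theorem epsEquiv_comp_pushout_pullback {K : Type} [Field K] {r : ℕ} (N : NoiseSystem K r) :
    (∀ (F G H : Qr r ⥤ ModuleCat K), IsTame F → IsTame G → IsTame H →
      ∀ (φ : F ⟶ G) (ψ : G ⟶ H) (ε₁ ε₂ : ℚ≥0),
        IsEpsEquiv N ε₁ φ → IsEpsEquiv N ε₂ ψ → IsEpsEquiv N (ε₁ + ε₂) (φ ≫ ψ)) ∧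
    (∀ (H F G P : Qr r ⥤ ModuleCat K), IsTame H → IsTame F → IsTame G → IsTame P →
      ∀ (φ : H ⟶ F) (t : H ⟶ G) (s : F ⟶ P) (φ' : G ⟶ P),
        IsPushout φ t s φ' → ∀ ε : ℚ≥0, IsEpsEquiv N ε φ → IsEpsEquiv N ε φ') ∧
    (∀ (H F G P : Qr r ⥤ ModuleCat K), IsTame H → IsTame F → IsTame G → IsTame P →
      ∀ (φ : H ⟶ F) (t : H ⟶ G) (s : F ⟶ P) (φ' : G ⟶ P),
        IsPullback φ t s φ' → ∀ ε : ℚ≥0, IsEpsEquiv N ε φ' → IsEpsEquiv N ε φ) :=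
  ⟨fun _ _ _ hF _ hH _ _ _ _ hφ hψ => hφ.comp hF hH hψ,
    fun _ _ _ _ _ _ hG hP _ _ _ _ hpo _ hφ => hφ.of_isPushout hG hP hpo,
    fun _ _ _ _ hH hF _ _ _ _ _ _ hpb _ hφ' => hφ'.of_isPullback hH hF hpb⟩
end
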